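/- For every nonzero h ∈ Z[ω] and every γ, π ∈ Z[ω] with γ ≡ π ≡ 1 (mod 3), one has ě(−γ²πh³/(3λ)) = ě(−h³/(3λ)) = 1, where λ = 1 + 2ω and ě(z) = e^{2πi(z+z̄)}. -/

import Mathlib

open scoped Classical
open MeasureTheory

noncomputable section

def ω3 : ℂ := Complex.exp (2 * Real.pi * Complex.I / 3)

def Zω : Subring ℂ := Subring.closure {ω3}

def ωE : Zω := ⟨ω3, Subring.subset_closure rfl⟩

def lam : Zω := 1 + 2 * ωE

def natNorm (a : Zω) : ℕ := ⌊Complex.normSq (a : ℂ)⌋₊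

def eE (z : ℂ) : ℂ := Complex.exp (2 * Real.pi * Complex.I * (z + (starRingEnd ℂ) z))

/-!
Since `conj λ = -λ`, for `z = -(a + 3y)/(3λ)` with `a ∈ ℤ`, `y ∈ ℤ[ω]` one gets
`z + conj z = (conj y - y)/λ`, an integer because `conj (m + nω) - (m + nω) = -nλ`; hence `ě(z) = 1`.
Every cube is congruent to a rational integer mod 3, as `(m + nω)³ ≡ m³ + n³`, and multiplying by
`γ²π ≡ 1 (mod 3)` preserves this.
-/

lemma isPrimitiveRoot_ω3 : IsPrimitiveRoot ω3 3 := by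
  simpa [ω3] using Complex.isPrimitiveRoot_exp 3 (by norm_num)

lemma ω3_sq_add_ω3_add_one : ω3 ^ 2 + ω3 + 1 = 0 := by
  simpa [Finset.sum_range_succ, add_comm, add_left_comm, add_assoc] using
    isPrimitiveRoot_ω3.geom_sum_eq_zero (by norm_num)

lemma conj_ω3 : starRingEnd ℂ ω3 = ω3 ^ 2 := by
  have hinv : starRingEnd ℂ ω3 * ω3 = 1 := by
    rw [ω3, ← Complex.exp_conj, ← Complex.exp_add]
    simp only [map_div₀, map_mul, map_ofNat, Complex.conj_ofReal, Complex.conj_I]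
    ring_nf
    exact Complex.exp_zero
  calc starRingEnd ℂ ω3 = starRingEnd ℂ ω3 * ω3 ^ 3 := by rw [isPrimitiveRoot_ω3.pow_eq_one, mul_one]
    _ = ω3 ^ 2 := by rw [pow_succ', ← mul_assoc, hinv, one_mul]

lemma ωE_pow_three : ωE ^ 3 = 1 := Subtype.ext isPrimitiveRoot_ω3.pow_eq_one

lemma Zω_coe_three : ((3 : Zω) : ℂ) = 3 := rfl

lemma coe_lam : (lam : ℂ) = 1 + 2 * ω3 := rfl

lemma coe_lam_ne_zero : (lam : ℂ) ≠ 0 := by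
  intro h
  have : (lam : ℂ) ^ 2 = -3 := by rw [coe_lam]; linear_combination 4 * ω3_sq_add_ω3_add_one
  simp [h] at this

lemma conj_lam : starRingEnd ℂ lam = -lam := by
  simp only [coe_lam, map_add, map_mul, map_one, map_ofNat, conj_ω3]
  linear_combination 2 * ω3_sq_add_ω3_add_one

lemma Zω_exists_eq_int_add_int_mul_ωE (a : Zω) : ∃ m n : ℤ, a = m + n * ωE := by
  suffices ∃ m n : ℤ, (a : ℂ) = m + n * ω3 by
    obtain ⟨m, n, h⟩ := this
    exact ⟨m, n, Subtype.ext (by simpa [ωE] using h)⟩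
  refine Subring.closure_induction (p := fun x _ => ∃ m n : ℤ, x = m + n * ω3) ?_ ?_ ?_ ?_ ?_ ?_ a.2
  · rintro x rfl; exact ⟨0, 1, by simp⟩
  · exact ⟨0, 0, by simp⟩
  · exact ⟨1, 0, by simp⟩
  · rintro x y _ _ ⟨m, n, rfl⟩ ⟨m', n', rfl⟩
    exact ⟨m + m', n + n', by push_cast; ring⟩
  · rintro x _ ⟨m, n, rfl⟩; exact ⟨-m, -n, by push_cast; ring⟩
  · rintro x y _ _ ⟨m, n, rfl⟩ ⟨m', n', rfl⟩
    refine ⟨m * m' - n * n', m * n' + m' * n - n * n', ?_⟩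
    push_cast
    linear_combination (n : ℂ) * n' * ω3_sq_add_ω3_add_one

lemma Zω_exists_conj_sub_eq_int_mul_lam (y : Zω) :
    ∃ n : ℤ, starRingEnd ℂ y - y = n * lam := by
  obtain ⟨m, n, rfl⟩ := Zω_exists_eq_int_add_int_mul_ωE y
  refine ⟨-n, ?_⟩
  push_cast [ωE, coe_lam]
  simp only [map_add, map_mul, map_intCast, conj_ω3]
  linear_combination (n : ℂ) * ω3_sq_add_ω3_add_one

lemma Zω_exists_three_dvd_pow_three_sub_int (h : Zω) : ∃ a : ℤ, (3 : Zω) ∣ h ^ 3 - a := by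
  obtain ⟨m, n, rfl⟩ := Zω_exists_eq_int_add_int_mul_ωE h
  refine ⟨m ^ 3 + n ^ 3, m ^ 2 * n * ωE + m * n ^ 2 * ωE ^ 2, ?_⟩
  push_cast
  linear_combination (n : Zω) ^ 3 * ωE_pow_three

lemma eE_eq_one_of_add_conj_eq_int {z : ℂ} {k : ℤ} (hz : z + starRingEnd ℂ z = k) : eE z = 1 := by
  rw [eE, hz, show 2 * (Real.pi : ℂ) * Complex.I * k = k * (2 * Real.pi * Complex.I) by ring]
  exact Complex.exp_int_mul_two_pi_mul_I k

lemma eE_neg_div_three_mul_lam_eq_one {x : Zω} {a : ℤ} (hx : (3 : Zω) ∣ x - a) :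
    eE (-(x : ℂ) / (3 * lam)) = 1 := by
  obtain ⟨y, hy⟩ := hx
  obtain ⟨n, hn⟩ := Zω_exists_conj_sub_eq_int_mul_lam y
  have hxy : (x : ℂ) = a + 3 * y := by
    have := congrArg ((↑) : Zω → ℂ) hy
    push_cast [Zω_coe_three] at this
    linear_combination this
  apply eE_eq_one_of_add_conj_eq_int (k := n)
  rw [map_div₀, map_neg, map_mul, conj_lam, hxy]
  simp only [map_add, map_mul, map_intCast, map_ofNat]
  calc _ = (starRingEnd ℂ y - y) * (lam : ℂ)⁻¹ := by ring
    _ = n := by rw [hn, mul_inv_cancel_right₀ coe_lam_ne_zero]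

lemma dvd_sq_mul_sub_one {R : Type*} [CommRing R] {n γ p : R}
    (hγ : n ∣ γ - 1) (hp : n ∣ p - 1) : n ∣ γ ^ 2 * p - 1 := by
  have h : γ ^ 2 * p - 1 = (γ - 1) * ((γ + 1) * p) + (p - 1) := by ring
  rw [h]
  exact dvd_add (dvd_mul_of_dvd_left hγ _) hp

theorem stmt7_general (h γ p : Zω)
    (hγ : (3 : Zω) ∣ (γ - 1)) (hp : (3 : Zω) ∣ (p - 1)) :
    eE (-((γ : ℂ) ^ 2 * (p : ℂ) * (h : ℂ) ^ 3) / (3 * (lam : ℂ))) = 1 ∧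
    eE (-((h : ℂ) ^ 3) / (3 * (lam : ℂ))) = 1 := by
  obtain ⟨a, hcube⟩ := Zω_exists_three_dvd_pow_three_sub_int h
  have htwist : (3 : Zω) ∣ γ ^ 2 * p * h ^ 3 - a := by
    have hsplit : γ ^ 2 * p * h ^ 3 - a = (γ ^ 2 * p - 1) * h ^ 3 + (h ^ 3 - a) := by ring
    rw [hsplit]
    exact dvd_add (dvd_mul_of_dvd_left (dvd_sq_mul_sub_one hγ hp) _) hcube
  constructor
  · simpa using eE_neg_div_three_mul_lam_eq_one htwist
  · simpa using eE_neg_div_three_mul_lam_eq_one hcube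

theorem stmt7 (h γ p : Zω) (hh : h ≠ 0)
    (hγ : (3 : Zω) ∣ (γ - 1)) (hp : (3 : Zω) ∣ (p - 1)) :
    eE (-((γ : ℂ) ^ 2 * (p : ℂ) * (h : ℂ) ^ 3) / (3 * (lam : ℂ))) = 1 ∧
    eE (-((h : ℂ) ^ 3) / (3 * (lam : ℂ))) = 1 :=
  stmt7_general h γ p hγ hp
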